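/- arXiv:2510.09057 — 6 statements merged into one kernel-verified Lean document; each statement's English description precedes it below -/
import Mathlib

section
/- Let X, Y, Z, W be subsets of Fin m, let A = Δ_X, B = Δ_Y, C = Δ_Z, E = Δ_W, and set s = |X|+|Y|+|Z|+|W|. Then for every message t ∈ (Fin m → 𝔽₂)⁴, either w(t) = 0 or 2·w(t) = 2^s, and the number of messages t with w(t) = 0 equals 2^{4m−s}. (Hence C_D^{(2)} is a one-weight binary linear code of length 2^s, dimension s and minimum distance 2^{s−1}.) -/
open Finset

/-- Euclidean dot product of vectors over `𝔽₂`. -/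
def dotp {m : ℕ} (x y : Fin m → ZMod 2) : ZMod 2 := ∑ i, x i * y i

/-- Support of a vector over `𝔽₂`. -/
def supp {m : ℕ} (v : Fin m → ZMod 2) : Finset (Fin m) :=
  Finset.univ.filter fun i => v i ≠ 0

/-- The simplicial complex `Δ_S` generated by `S ⊆ [m]`. -/
def delta {m : ℕ} (S : Finset (Fin m)) : Finset (Fin m → ZMod 2) :=
  Finset.univ.filter fun u => supp u ⊆ S

/-- The complement `Δ_S^c` of the simplicial complex generated by `S`. -/
def deltac {m : ℕ} (S : Finset (Fin m)) : Finset (Fin m → ZMod 2) :=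
  Finset.univ \ delta S

/-- A message `(x₁, x₂, x₃, x₄)` consisting of four vectors over `𝔽₂`. -/
abbrev Msg (m : ℕ) :=
  (Fin m → ZMod 2) × (Fin m → ZMod 2) × (Fin m → ZMod 2) × (Fin m → ZMod 2)

/-- The value of the codeword of the subfield code `C_D^{(2)}` associated to the
message `t = (x₁,x₂,x₃,x₄)` at the position `p = (a,b,c,e)`:
`(x₁+x₄)·a + x₃·b + x₂·c + x₁·e`. -/
def cword {m : ℕ} (t p : Msg m) : ZMod 2 :=
  dotp (t.1 + t.2.2.2) p.1 + dotp t.2.2.1 p.2.1 + dotp t.2.1 p.2.2.1 +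
    dotp t.1 p.2.2.2

/-- Hamming weight of the codeword associated to the message `t`, for the code
with defining positions `A × B × C × E`. -/
def cw {m : ℕ} (A B C E : Finset (Fin m → ZMod 2)) (t : Msg m) : ℕ :=
  ((A ×ˢ B ×ˢ C ×ˢ E).filter fun p => cword t p = 1).card

lemma zmod2_cases (x : ZMod 2) : x = 0 ∨ x = 1 := by revert x; decide

lemma zmod2_add_self (x : ZMod 2) : x + x = 0 := by revert x; decide

lemma vec_add_self {m : ℕ} (v : Fin m → ZMod 2) : v + v = 0 :=
  funext fun i => zmod2_add_self (v i)

lemma mem_delta {m : ℕ} {S : Finset (Fin m)} {u : Fin m → ZMod 2} :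
    u ∈ delta S ↔ ∀ i, i ∉ S → u i = 0 := by
  simp only [delta, supp, Finset.mem_filter, Finset.mem_univ, true_and,
    Finset.subset_iff]
  constructor
  · intro h i hi
    by_contra hne
    exact hi (h hne)
  · intro h i hi
    by_contra hS
    exact hi (h i hS)

lemma zero_mem_delta {m : ℕ} (S : Finset (Fin m)) : (0 : Fin m → ZMod 2) ∈ delta S := by
  simp [mem_delta]

lemma add_mem_delta {m : ℕ} {S : Finset (Fin m)} {u v : Fin m → ZMod 2}
    (hu : u ∈ delta S) (hv : v ∈ delta S) : u + v ∈ delta S := by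
  rw [mem_delta] at *
  intro i hi
  simp [hu i hi, hv i hi]

lemma card_delta {m : ℕ} (S : Finset (Fin m)) : (delta S).card = 2 ^ S.card := by
  have h : delta S =
      Fintype.piFinset (fun i => if i ∈ S then (Finset.univ : Finset (ZMod 2)) else {0}) := by
    ext u
    simp only [mem_delta, Fintype.mem_piFinset]
    constructor
    · intro h i
      by_cases hi : i ∈ S <;> simp [hi, h i]
    · intro h i hi
      have := h i
      simpa [hi] using this
  rw [h, Fintype.card_piFinset]
  have : ∀ i : Fin m,
      ((if i ∈ S then (Finset.univ : Finset (ZMod 2)) else {0}).card)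
        = if i ∈ S then 2 else 1 := by
    intro i; by_cases hi : i ∈ S <;> simp [hi]
  simp_rw [this]
  rw [Finset.prod_ite_mem, Finset.univ_inter, Finset.prod_const]

lemma dotp_zero_right {m : ℕ} (v : Fin m → ZMod 2) : dotp v 0 = 0 := by simp [dotp]

lemma dotp_add_right {m : ℕ} (v a b : Fin m → ZMod 2) :
    dotp v (a + b) = dotp v a + dotp v b := by
  simp [dotp, mul_add, Finset.sum_add_distrib]

lemma dotp_single {m : ℕ} (v : Fin m → ZMod 2) (i : Fin m) :
    dotp v (fun j => if j = i then 1 else 0) = v i := by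
  simp [dotp, mul_ite]

lemma dotp_eq_zero {m : ℕ} {S : Finset (Fin m)} {v a : Fin m → ZMod 2}
    (h : ∀ i ∈ S, v i = 0) (ha : a ∈ delta S) : dotp v a = 0 := by
  apply Finset.sum_eq_zero
  intro j _
  by_cases hj : a j = 0
  · simp [hj]
  · have hjS : j ∈ S := by
      by_contra hjS
      exact hj (mem_delta.mp ha j hjS)
    simp [h j hjS]

lemma cword_add {m : ℕ} (t p q : Msg m) :
    cword t (p + q) = cword t p + cword t q := by
  simp only [cword, Prod.fst_add, Prod.snd_add, dotp_add_right]
  ring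

lemma single_mem_delta {m : ℕ} {S : Finset (Fin m)} {i : Fin m} (hi : i ∈ S) :
    (fun j => if j = i then (1 : ZMod 2) else 0) ∈ delta S := by
  rw [mem_delta]
  intro j hj
  have : j ≠ i := by rintro rfl; exact hj hi
  simp [this]

theorem stmt5 (m : ℕ) (hm : 0 < m) (X Y Z W : Finset (Fin m)) :
    (∀ t : Msg m,
      cw (delta X) (delta Y) (delta Z) (delta W) t = 0 ∨
        2 * cw (delta X) (delta Y) (delta Z) (delta W) t =
          2 ^ (X.card + Y.card + Z.card + W.card)) ∧
    ((Finset.univ.filter fun t : Msg m =>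
        cw (delta X) (delta Y) (delta Z) (delta W) t = 0).card
      = 2 ^ (4 * m - (X.card + Y.card + Z.card + W.card))) := by
  set P : Finset (Msg m) := delta X ×ˢ delta Y ×ˢ delta Z ×ˢ delta W with hP
  have hPcard : P.card = 2 ^ (X.card + Y.card + Z.card + W.card) := by
    simp only [hP, Finset.card_product, card_delta]
    rw [← pow_add, ← pow_add, ← pow_add]
    congr 1
    omega
  have hPadd : ∀ p ∈ P, ∀ q ∈ P, p + q ∈ P := by
    rintro ⟨a, b, c, d⟩ hp ⟨a', b', c', d'⟩ hq
    simp only [hP, Finset.mem_product] at hp hq ⊢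
    exact ⟨add_mem_delta hp.1 hq.1, add_mem_delta hp.2.1 hq.2.1,
      add_mem_delta hp.2.2.1 hq.2.2.1, add_mem_delta hp.2.2.2 hq.2.2.2⟩
  have hself : ∀ q : Msg m, q + q = 0 := by
    rintro ⟨a, b, c, d⟩
    have h2 : ∀ v : Fin m → ZMod 2, v + v = 0 :=
      fun v => funext fun i => zmod2_add_self (v i)
    simp [Prod.ext_iff, h2]
  constructor
  · intro t
    by_cases h : ∀ p ∈ P, cword t p = 0
    · left
      rw [cw, Finset.card_eq_zero, Finset.filter_eq_empty_iff]
      intro p hp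
      rw [h p hp]
      decide
    · right
      push_neg at h
      obtain ⟨q, hq, hq1⟩ := h
      have hq1 : cword t q = 1 := (zmod2_cases (cword t q)).resolve_left hq1
      have hsplit := Finset.card_filter_add_card_filter_not
        (s := P) (p := fun p => cword t p = 1)
      have hbij : (P.filter fun p => cword t p = 1).card
          = (P.filter fun p => ¬ cword t p = 1).card := by
        apply Finset.card_bij (fun p _ => p + q)
        · intro p hp
          simp only [Finset.mem_filter] at hp ⊢
          refine ⟨hPadd p hp.1 q hq, ?_⟩
          rw [cword_add, hp.2, hq1]
          decide
        · intro p hp p' hp' hpq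
          have := congrArg (· + q) hpq
          simpa [add_assoc, hself q] using this
        · intro r hr
          refine ⟨r + q, ?_, by rw [add_assoc, hself q, add_zero]⟩
          simp only [Finset.mem_filter] at hr ⊢
          refine ⟨hPadd r hr.1 q hq, ?_⟩
          rw [cword_add, hq1]
          rcases zmod2_cases (cword t r) with h0 | h1
          · rw [h0]; decide
          · exact absurd h1 hr.2
      rw [cw, two_mul, ← hPcard, ← hsplit, hbij]
  · -- counting messages with zero weight
    have hkey : ∀ t : Msg m,
        cw (delta X) (delta Y) (delta Z) (delta W) t = 0 ↔
          (t.1 + t.2.2.2, t.2.1, t.2.2.1, t.1) ∈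
            (delta Xᶜ ×ˢ delta Zᶜ ×ˢ delta Yᶜ ×ˢ delta Wᶜ) := by
      intro t
      have hzero : cw (delta X) (delta Y) (delta Z) (delta W) t = 0 ↔
          ∀ p ∈ P, cword t p = 0 := by
        rw [cw, Finset.card_eq_zero, Finset.filter_eq_empty_iff]
        constructor
        · intro h p hp
          rcases zmod2_cases (cword t p) with h0 | h1
          · exact h0
          · exact absurd h1 (h hp)
        · intro h p hp
          rw [h p hp]; decide
      rw [hzero]
      have hmemc : ∀ (S : Finset (Fin m)) (v : Fin m → ZMod 2),
          v ∈ delta Sᶜ ↔ ∀ i ∈ S, v i = 0 := by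
        intro S v
        rw [mem_delta]
        constructor
        · intro h i hi
          exact h i (by simp [hi])
        · intro h i hi
          exact h i (by simpa using hi)
      simp only [Finset.mem_product, hmemc]
      constructor
      · intro h
        refine ⟨?_, ?_, ?_, ?_⟩
        · intro i hi
          have := h ((fun j => if j = i then 1 else 0), 0, 0, 0)
            (by simp only [hP, Finset.mem_product]
                exact ⟨single_mem_delta hi, zero_mem_delta _, zero_mem_delta _,
                  zero_mem_delta _⟩)
          simpa [cword, dotp_zero_right, dotp_single] using this
        · intro i hi
          have := h (0, 0, (fun j => if j = i then 1 else 0), 0)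
            (by simp only [hP, Finset.mem_product]
                exact ⟨zero_mem_delta _, zero_mem_delta _, single_mem_delta hi,
                  zero_mem_delta _⟩)
          simpa [cword, dotp_zero_right, dotp_single] using this
        · intro i hi
          have := h (0, (fun j => if j = i then 1 else 0), 0, 0)
            (by simp only [hP, Finset.mem_product]
                exact ⟨zero_mem_delta _, single_mem_delta hi, zero_mem_delta _,
                  zero_mem_delta _⟩)
          simpa [cword, dotp_zero_right, dotp_single] using this
        · intro i hi
          have := h (0, 0, 0, (fun j => if j = i then 1 else 0))
            (by simp only [hP, Finset.mem_product]
                exact ⟨zero_mem_delta _, zero_mem_delta _, zero_mem_delta _,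
                  single_mem_delta hi⟩)
          simpa [cword, dotp_zero_right, dotp_single] using this
      · rintro ⟨h1, h2, h3, h4⟩ p hp
        simp only [hP, Finset.mem_product] at hp
        rw [cword, dotp_eq_zero h1 hp.1, dotp_eq_zero h3 hp.2.1,
          dotp_eq_zero h2 hp.2.2.1, dotp_eq_zero h4 hp.2.2.2]
        decide
    have hbij : (Finset.univ.filter fun t : Msg m =>
        cw (delta X) (delta Y) (delta Z) (delta W) t = 0).card
        = (delta Xᶜ ×ˢ delta Zᶜ ×ˢ delta Yᶜ ×ˢ delta Wᶜ).card := by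
      apply Finset.card_bij (fun t _ => (t.1 + t.2.2.2, t.2.1, t.2.2.1, t.1))
      · intro t ht
        simp only [Finset.mem_filter, Finset.mem_univ, true_and] at ht
        exact (hkey t).mp ht
      · rintro ⟨a, b, c, d⟩ _ ⟨a', b', c', d'⟩ _ h
        simp only [Prod.mk.injEq] at h ⊢
        obtain ⟨h1, h2, h3, h4⟩ := h
        subst h4
        exact ⟨rfl, h2, h3, add_left_cancel h1⟩
      · rintro ⟨u1, u2, u3, u4⟩ hu
        have hcanc : u4 + (u4 + u1) = u1 := by
          rw [← add_assoc, vec_add_self, zero_add]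
        refine ⟨(u4, u2, u3, u4 + u1), ?_, ?_⟩
        · simp only [Finset.mem_filter, Finset.mem_univ, true_and]
          rw [hkey]
          simpa [hcanc] using hu
        · simp [hcanc]
    rw [hbij]
    have hcards : X.card ≤ m ∧ Y.card ≤ m ∧ Z.card ≤ m ∧ W.card ≤ m := by
      refine ⟨?_, ?_, ?_, ?_⟩ <;>
        simpa using Finset.card_le_univ (α := Fin m) _
    simp only [Finset.card_product, card_delta, Finset.card_compl,
      Fintype.card_fin]
    rw [← pow_add, ← pow_add, ← pow_add]
    congr 1
    omega
end

section
/- Let X, Y, Z, W be subsets of Fin m with |X|, |Y|, |Z| pairwise distinct and |X|, |Y|, |Z| < m, and let A = Δ_X^c, B = Δ_Y^c, C = Δ_Z^c, E = Δ_W. Then for every message t ∈ (Fin m → 𝔽₂)⁴, either w(t) = 0 or 2·w(t) belongs to the set { (2^m−2^{|X|})(2^m−2^{|Y|})·2^{m+|W|}, (2^m−2^{|X|})(2^m−2^{|Z|})·2^{m+|W|}, (2^m−2^{|Y|})(2^m−2^{|Z|})·2^{m+|W|}, (2^m−2^{|X|})(2^m−2^{|Y|}−2^{|Z|})·2^{m+|W|},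 (2^m−2^{|Y|})(2^m−2^{|X|}−2^{|Z|})·2^{m+|W|}, (2^m−2^{|Z|})(2^m−2^{|X|}−2^{|Y|})·2^{m+|W|}, (2^{2m}−2^{m+|X|}−2^{m+|Y|}−2^{m+|Z|}+2^{|X|+|Y|}+2^{|Y|+|Z|}+2^{|X|+|Z|})·2^{m+|W|}, (2^m−2^{|X|})(2^m−2^{|Y|})(2^m−2^{|Z|})·2^{|W|} }; moreover the number of messages t with w(t) = 0 equals 2^{m−|W|}. (Hence C_D^{(2)} is an eight-weight binary linear code of length (2^m−2^{|X|})(2^m−2^{|Y|})(2^m−2^{|Z|})2^{|W|} and dimension 3m+|W|.) -/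
open Finset

def chi (x : ZMod 2) : ℤ := if x = 0 then 1 else -1

lemma chi_add (x y : ZMod 2) : chi (x + y) = chi x * chi y := by revert x y; decide

lemma chi_sum {α : Type*} (s : Finset α) (f : α → ZMod 2) :
    chi (∑ i ∈ s, f i) = ∏ i ∈ s, chi (f i) := by
  induction s using Finset.cons_induction with
  | empty => simp [chi]
  | cons a s ha ih => rw [Finset.sum_cons, Finset.prod_cons, chi_add, ih]

lemma sum_chi_count {α : Type*} (P : Finset α) (f : α → ZMod 2) :
    ∑ p ∈ P, chi (f p) = (P.card : ℤ) - 2 * ((P.filter fun p => f p = 1).card : ℤ) := by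
  have h : ∀ x : ZMod 2, chi x = 1 - 2 * (if x = 1 then (1:ℤ) else 0) := by decide
  simp_rw [h, Finset.sum_sub_distrib, Finset.sum_const, ← Finset.mul_sum, Finset.sum_boole]
  ring

lemma delta_eq_piFinset {m : ℕ} (S : Finset (Fin m)) :
    delta S = Fintype.piFinset
      (fun i => if i ∈ S then (Finset.univ : Finset (ZMod 2)) else {0}) := by
  ext a
  simp only [delta, supp, Finset.mem_filter, Finset.mem_univ, true_and,
    Fintype.mem_piFinset, Finset.subset_iff, Finset.mem_filter, Finset.mem_univ, true_and]
  constructor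
  · intro h i
    by_cases hi : i ∈ S
    · simp [hi]
    · simp only [hi, if_false, Finset.mem_singleton]
      by_contra hne
      exact hi (h hne)
  · intro h i hne
    by_contra hi
    have := h i
    simp [hi] at this
    exact hne this

lemma sum_delta_chi {m : ℕ} (S : Finset (Fin m)) (v : Fin m → ZMod 2) :
    ∑ a ∈ delta S, chi (dotp v a) = if ∀ i ∈ S, v i = 0 then 2 ^ S.card else 0 := by
  have hterm : ∀ a : Fin m → ZMod 2, chi (dotp v a) = ∏ i, chi (v i * a i) := by
    intro a; rw [dotp, chi_sum]
  rw [delta_eq_piFinset]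
  simp_rw [hterm]
  have hps := Finset.prod_univ_sum (fun i => if i ∈ S then (Finset.univ : Finset (ZMod 2)) else {0})
    (fun i b => chi (v i * b))
  rw [← hps]
  have hfac : ∀ i : Fin m,
      (∑ b ∈ (if i ∈ S then (Finset.univ : Finset (ZMod 2)) else {0}), chi (v i * b))
      = if i ∈ S then (if v i = 0 then 2 else 0) else 1 := by
    intro i
    by_cases hi : i ∈ S
    · simp only [hi, if_true]
      have : ∀ c : ZMod 2, (∑ b : ZMod 2, chi (c * b)) = if c = 0 then 2 else 0 := by decide
      exact this (v i)
    · simp [hi, chi]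
  simp_rw [hfac]
  rw [Finset.prod_ite_mem, Finset.univ_inter]
  by_cases hv : ∀ i ∈ S, v i = 0
  · rw [if_pos hv, Finset.prod_congr rfl (fun i hi => if_pos (hv i hi)), Finset.prod_const]
  · rw [if_neg hv]
    push_neg at hv
    obtain ⟨i, hi, hne⟩ := hv
    exact Finset.prod_eq_zero hi (if_neg hne)

lemma delta_univ {m : ℕ} : delta (Finset.univ : Finset (Fin m)) = Finset.univ := by
  simp [delta, Finset.subset_univ]

lemma card_univ_fun {m : ℕ} : (Finset.univ : Finset (Fin m → ZMod 2)).card = 2 ^ m := by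
  rw [← delta_univ, card_delta, Finset.card_univ, Fintype.card_fin]

lemma sum_univ_chi {m : ℕ} (v : Fin m → ZMod 2) :
    ∑ a : Fin m → ZMod 2, chi (dotp v a) = if v = 0 then 2 ^ m else 0 := by
  have h := sum_delta_chi (Finset.univ : Finset (Fin m)) v
  rw [delta_univ] at h
  rw [h, Finset.card_univ, Fintype.card_fin]
  by_cases hv : v = 0
  · rw [if_pos hv, if_pos (by intro i _; rw [hv]; rfl)]
  · rw [if_neg hv, if_neg]
    intro hall
    exact hv (funext fun i => hall i (Finset.mem_univ i))

lemma sum_deltac_chi {m : ℕ} (S : Finset (Fin m)) (v : Fin m → ZMod 2) :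
    ∑ a ∈ deltac S, chi (dotp v a) =
      (if v = 0 then (2:ℤ) ^ m else 0) - (if ∀ i ∈ S, v i = 0 then 2 ^ S.card else 0) := by
  rw [deltac, Finset.sum_sdiff_eq_sub (Finset.subset_univ _), sum_delta_chi, sum_univ_chi]

lemma card_deltac {m : ℕ} (S : Finset (Fin m)) : (deltac S).card = 2 ^ m - 2 ^ S.card := by
  rw [deltac, Finset.card_sdiff_of_subset (Finset.subset_univ _), card_delta, card_univ_fun]

lemma sum_prod_chi {m : ℕ} (A B C E : Finset (Fin m → ZMod 2)) (t : Msg m) :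
    ∑ p ∈ A ×ˢ B ×ˢ C ×ˢ E, chi (cword t p) =
      (∑ a ∈ A, chi (dotp (t.1 + t.2.2.2) a)) * ((∑ b ∈ B, chi (dotp t.2.2.1 b)) *
        ((∑ c ∈ C, chi (dotp t.2.1 c)) * (∑ e ∈ E, chi (dotp t.1 e)))) := by
  simp only [Finset.sum_product, cword, chi_add, mul_assoc, ← Finset.mul_sum]
  simp only [← Finset.sum_mul]

lemma two_cw_eq {m : ℕ} (A B C E : Finset (Fin m → ZMod 2)) (t : Msg m) :
    2 * (cw A B C E t : ℤ) =
      (A.card : ℤ) * B.card * C.card * E.card -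
      (∑ a ∈ A, chi (dotp (t.1 + t.2.2.2) a)) * ((∑ b ∈ B, chi (dotp t.2.2.1 b)) *
        ((∑ c ∈ C, chi (dotp t.2.1 c)) * (∑ e ∈ E, chi (dotp t.1 e)))) := by
  have h := sum_chi_count (A ×ˢ B ×ˢ C ×ˢ E) (cword t)
  rw [sum_prod_chi] at h
  simp only [Finset.card_product] at h
  rw [cw]
  push_cast at h ⊢
  linarith [h]

lemma two_pow_add_lt' {a b n : ℕ} (h : a < b) (hb : b < n) : 2^a + 2^b < 2^n := by
  have h1 : (2:ℕ) ^ a < 2 ^ b := Nat.pow_lt_pow_right one_lt_two h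
  have h2 : (2:ℕ) ^ (b+1) ≤ 2 ^ n := Nat.pow_le_pow_right (by norm_num) hb
  have h3 : (2:ℕ) ^ (b+1) = 2^b + 2^b := by rw [pow_succ]; ring
  linarith

lemma two_pow_add_lt {a b n : ℕ} (hab : a ≠ b) (ha : a < n) (hb : b < n) :
    2 ^ a + 2 ^ b < 2 ^ n := by
  rcases Nat.lt_or_ge a b with h | h
  · exact two_pow_add_lt' h hb
  · have := two_pow_add_lt' (lt_of_le_of_ne h (Ne.symm hab)) ha
    linarith

lemma two_pow_add3_lt' {a b c n : ℕ} (h1 : a < b) (h2 : b < c) (h3 : c < n) :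
    2^a + 2^b + 2^c < 2^n := by
  have hab : 2^a + 2^b < 2^c := two_pow_add_lt' h1 h2
  have h4 : (2:ℕ) ^ (c+1) ≤ 2 ^ n := Nat.pow_le_pow_right (by norm_num) h3
  have h5 : (2:ℕ) ^ (c+1) = 2^c + 2^c := by rw [pow_succ]; ring
  linarith

lemma two_pow_add3_lt {a b c n : ℕ} (hab : a ≠ b) (hac : a ≠ c) (hbc : b ≠ c)
    (ha : a < n) (hb : b < n) (hc : c < n) : 2^a + 2^b + 2^c < 2^n := by
  have key : ∀ x y z : ℕ, x < y → y < z → z < n → 2^x+2^y+2^z < 2^n :=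
    fun x y z hx hy hz => two_pow_add3_lt' hx hy hz
  rcases Nat.lt_trichotomy a b with h1 | h1 | h1
  · rcases Nat.lt_trichotomy b c with h2 | h2 | h2
    · linarith [key a b c h1 h2 hc]
    · exact absurd h2 hbc
    · rcases Nat.lt_trichotomy a c with h3 | h3 | h3
      · linarith [key a c b h3 h2 hb]
      · exact absurd h3 hac
      · linarith [key c a b h3 h1 hb]
  · exact absurd h1 hab
  · rcases Nat.lt_trichotomy a c with h3 | h3 | h3
    · linarith [key b a c h1 h3 hc]
    · exact absurd h3 hac
    · rcases Nat.lt_trichotomy b c with h2 | h2 | h2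
      · linarith [key b c a h2 h3 ha]
      · exact absurd h2 hbc
      · linarith [key c b a h2 h1 ha]

lemma master {m : ℕ} (X Y Z W : Finset (Fin m))
    (hXY : X.card ≠ Y.card) (hXZ : X.card ≠ Z.card) (hYZ : Y.card ≠ Z.card)
    (hXm : X.card < m) (hYm : Y.card < m) (hZm : Z.card < m) (t : Msg m) :
    ((t.1 + t.2.2.2 = 0 ∧ t.2.2.1 = 0 ∧ t.2.1 = 0 ∧ ∀ i ∈ W, t.1 i = 0) ∧
      cw (deltac X) (deltac Y) (deltac Z) (delta W) t = 0) ∨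
    (¬(t.1 + t.2.2.2 = 0 ∧ t.2.2.1 = 0 ∧ t.2.1 = 0 ∧ ∀ i ∈ W, t.1 i = 0) ∧
      0 < cw (deltac X) (deltac Y) (deltac Z) (delta W) t ∧
      2 * cw (deltac X) (deltac Y) (deltac Z) (delta W) t ∈
        ({(2 ^ m - 2 ^ X.card) * (2 ^ m - 2 ^ Y.card) * 2 ^ (m + W.card),
          (2 ^ m - 2 ^ X.card) * (2 ^ m - 2 ^ Z.card) * 2 ^ (m + W.card),
          (2 ^ m - 2 ^ Y.card) * (2 ^ m - 2 ^ Z.card) * 2 ^ (m + W.card),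
          (2 ^ m - 2 ^ X.card) * (2 ^ m - 2 ^ Y.card - 2 ^ Z.card) * 2 ^ (m + W.card),
          (2 ^ m - 2 ^ Y.card) * (2 ^ m - 2 ^ X.card - 2 ^ Z.card) * 2 ^ (m + W.card),
          (2 ^ m - 2 ^ Z.card) * (2 ^ m - 2 ^ X.card - 2 ^ Y.card) * 2 ^ (m + W.card),
          (2 ^ (2 * m) - 2 ^ (m + X.card) - 2 ^ (m + Y.card) - 2 ^ (m + Z.card)
            + 2 ^ (X.card + Y.card) + 2 ^ (Y.card + Z.card) + 2 ^ (X.card + Z.card)) *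
            2 ^ (m + W.card),
          (2 ^ m - 2 ^ X.card) * (2 ^ m - 2 ^ Y.card) * (2 ^ m - 2 ^ Z.card) *
            2 ^ W.card} : Set ℕ)) := by
  obtain ⟨a, b, c, d⟩ := t
  set n := cw (deltac X) (deltac Y) (deltac Z) (delta W) (a, b, c, d) with hn
  -- basic inequalities
  have hleX : (2:ℕ)^X.card ≤ 2^m := Nat.pow_le_pow_right (by norm_num) hXm.le
  have hleY : (2:ℕ)^Y.card ≤ 2^m := Nat.pow_le_pow_right (by norm_num) hYm.le
  have hleZ : (2:ℕ)^Z.card ≤ 2^m := Nat.pow_le_pow_right (by norm_num) hZm.le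
  have pMx : (0:ℤ) < 2^m - 2^X.card := by
    have : (2:ℕ)^X.card < 2^m := Nat.pow_lt_pow_right one_lt_two hXm
    have : ((2:ℤ)^X.card) < 2^m := by exact_mod_cast this
    linarith
  have pMy : (0:ℤ) < 2^m - 2^Y.card := by
    have : (2:ℕ)^Y.card < 2^m := Nat.pow_lt_pow_right one_lt_two hYm
    have : ((2:ℤ)^Y.card) < 2^m := by exact_mod_cast this
    linarith
  have pMz : (0:ℤ) < 2^m - 2^Z.card := by
    have : (2:ℕ)^Z.card < 2^m := Nat.pow_lt_pow_right one_lt_two hZm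
    have : ((2:ℤ)^Z.card) < 2^m := by exact_mod_cast this
    linarith
  have pW : (0:ℤ) < 2^W.card := by positivity
  have pX' : (0:ℤ) < 2^X.card := by positivity
  have pY' : (0:ℤ) < 2^Y.card := by positivity
  have pZ' : (0:ℤ) < 2^Z.card := by positivity
  have pMyz : (0:ℤ) < 2^m - 2^Y.card - 2^Z.card := by
    have h := two_pow_add_lt hYZ hYm hZm
    have : ((2:ℤ)^Y.card + 2^Z.card) < 2^m := by exact_mod_cast h
    linarith
  have pMxz : (0:ℤ) < 2^m - 2^X.card - 2^Z.card := by
    have h := two_pow_add_lt hXZ hXm hZm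
    have : ((2:ℤ)^X.card + 2^Z.card) < 2^m := by exact_mod_cast h
    linarith
  have pMxy : (0:ℤ) < 2^m - 2^X.card - 2^Y.card := by
    have h := two_pow_add_lt hXY hXm hYm
    have : ((2:ℤ)^X.card + 2^Y.card) < 2^m := by exact_mod_cast h
    linarith
  -- ℕ sub inequalities for casting
  have hleYZ : (2:ℕ)^Z.card ≤ 2^m - 2^Y.card := by
    have h := two_pow_add_lt hYZ hYm hZm
    exact Nat.le_sub_of_add_le (by linarith)
  have hleXZ : (2:ℕ)^Z.card ≤ 2^m - 2^X.card := by
    have h := two_pow_add_lt hXZ hXm hZm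
    exact Nat.le_sub_of_add_le (by linarith)
  have hleXY : (2:ℕ)^Y.card ≤ 2^m - 2^X.card := by
    have h := two_pow_add_lt hXY hXm hYm
    exact Nat.le_sub_of_add_le (by linarith)
  have htrip : (2:ℕ)^(m+X.card) + 2^(m+Y.card) + 2^(m+Z.card) < 2^(2*m) :=
    two_pow_add3_lt (by omega) (by omega) (by omega) (by omega) (by omega) (by omega)
  have he1 : (2:ℕ)^(m+X.card) ≤ 2^(2*m) := by
    linarith [Nat.zero_le ((2:ℕ)^(m+Y.card)), Nat.zero_le ((2:ℕ)^(m+Z.card))]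
  have he2 : (2:ℕ)^(m+Y.card) ≤ 2^(2*m) - 2^(m+X.card) :=
    Nat.le_sub_of_add_le (by linarith [Nat.zero_le ((2:ℕ)^(m+Z.card))])
  have he3 : (2:ℕ)^(m+Z.card) ≤ 2^(2*m) - 2^(m+X.card) - 2^(m+Y.card) := by
    refine Nat.le_sub_of_add_le (Nat.le_sub_of_add_le ?_)
    linarith
  -- the key character-sum identity
  have h2n : 2 * (n:ℤ) =
      ((2:ℤ)^m - 2^X.card) * ((2^m - 2^Y.card) * ((2^m - 2^Z.card) * 2^W.card)) -
      ((if a + d = 0 then (2:ℤ)^m else 0) - (if ∀ i ∈ X, (a + d) i = 0 then 2^X.card else 0)) *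
      (((if c = 0 then (2:ℤ)^m else 0) - (if ∀ i ∈ Y, c i = 0 then 2^Y.card else 0)) *
      (((if b = 0 then (2:ℤ)^m else 0) - (if ∀ i ∈ Z, b i = 0 then 2^Z.card else 0)) *
      (if ∀ i ∈ W, a i = 0 then (2:ℤ)^W.card else 0))) := by
    have h := two_cw_eq (deltac X) (deltac Y) (deltac Z) (delta W) (a, b, c, d)
    rw [card_deltac, card_deltac, card_deltac, card_delta,
        sum_deltac_chi, sum_deltac_chi, sum_deltac_chi, sum_delta_chi] at h
    rw [← hn] at h
    rw [h]
    push_cast [Nat.cast_sub hleX, Nat.cast_sub hleY, Nat.cast_sub hleZ]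
    ring
  have nat_eq : ∀ k : ℕ, ((2*n : ℕ):ℤ) = (k:ℤ) → 2*n = k := fun k h => by exact_mod_cast h
  have pM : (0:ℤ) < 2^m := by positivity
  by_cases hE : ∀ i ∈ W, a i = 0
  swap
  · -- SE = 0
    right
    have hval : 2*(n:ℤ) =
        ((2:ℤ)^m - 2^X.card) * ((2^m - 2^Y.card) * ((2^m - 2^Z.card) * 2^W.card)) := by
      rw [h2n, if_neg hE]; ring
    have hp : (0:ℤ) < 2*(n:ℤ) := by
      rw [hval]; exact mul_pos pMx (mul_pos pMy (mul_pos pMz pW))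
    refine ⟨fun h => hE h.2.2.2, by exact_mod_cast (by linarith : (0:ℤ) < (n:ℤ)), ?_⟩
    · simp only [Set.mem_insert_iff, Set.mem_singleton_iff]
      refine Or.inr (Or.inr (Or.inr (Or.inr (Or.inr (Or.inr (Or.inr ?_))))))
      apply nat_eq
      push_cast [Nat.cast_sub hleX, Nat.cast_sub hleY, Nat.cast_sub hleZ]
      rw [hval]; ring
  by_cases hA1 : ∀ i ∈ X, (a + d) i = 0
  swap
  · right
    have hA0 : ¬(a + d = 0) := fun h => hA1 (fun i _ => by rw [h]; rfl)
    have hval : 2*(n:ℤ) =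
        ((2:ℤ)^m - 2^X.card) * ((2^m - 2^Y.card) * ((2^m - 2^Z.card) * 2^W.card)) := by
      rw [h2n, if_neg hA0, if_neg hA1]; ring
    have hp : (0:ℤ) < 2*(n:ℤ) := by
      rw [hval]; exact mul_pos pMx (mul_pos pMy (mul_pos pMz pW))
    refine ⟨fun h => hA0 h.1, by exact_mod_cast (by linarith : (0:ℤ) < (n:ℤ)), ?_⟩
    · simp only [Set.mem_insert_iff, Set.mem_singleton_iff]
      refine Or.inr (Or.inr (Or.inr (Or.inr (Or.inr (Or.inr (Or.inr ?_))))))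
      apply nat_eq
      push_cast [Nat.cast_sub hleX, Nat.cast_sub hleY, Nat.cast_sub hleZ]
      rw [hval]; ring
  by_cases hB1 : ∀ i ∈ Y, c i = 0
  swap
  · right
    have hB0 : ¬(c = 0) := fun h => hB1 (fun i _ => by rw [h]; rfl)
    have hval : 2*(n:ℤ) =
        ((2:ℤ)^m - 2^X.card) * ((2^m - 2^Y.card) * ((2^m - 2^Z.card) * 2^W.card)) := by
      rw [h2n, if_neg hB0, if_neg hB1]; ring
    have hp : (0:ℤ) < 2*(n:ℤ) := by
      rw [hval]; exact mul_pos pMx (mul_pos pMy (mul_pos pMz pW))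
    refine ⟨fun h => hB0 h.2.1, by exact_mod_cast (by linarith : (0:ℤ) < (n:ℤ)), ?_⟩
    · simp only [Set.mem_insert_iff, Set.mem_singleton_iff]
      refine Or.inr (Or.inr (Or.inr (Or.inr (Or.inr (Or.inr (Or.inr ?_))))))
      apply nat_eq
      push_cast [Nat.cast_sub hleX, Nat.cast_sub hleY, Nat.cast_sub hleZ]
      rw [hval]; ring
  by_cases hC1 : ∀ i ∈ Z, b i = 0
  swap
  · right
    have hC0 : ¬(b = 0) := fun h => hC1 (fun i _ => by rw [h]; rfl)
    have hval : 2*(n:ℤ) =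
        ((2:ℤ)^m - 2^X.card) * ((2^m - 2^Y.card) * ((2^m - 2^Z.card) * 2^W.card)) := by
      rw [h2n, if_neg hC0, if_neg hC1]; ring
    have hp : (0:ℤ) < 2*(n:ℤ) := by
      rw [hval]; exact mul_pos pMx (mul_pos pMy (mul_pos pMz pW))
    refine ⟨fun h => hC0 h.2.2.1, by exact_mod_cast (by linarith : (0:ℤ) < (n:ℤ)), ?_⟩
    · simp only [Set.mem_insert_iff, Set.mem_singleton_iff]
      refine Or.inr (Or.inr (Or.inr (Or.inr (Or.inr (Or.inr (Or.inr ?_))))))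
      apply nat_eq
      push_cast [Nat.cast_sub hleX, Nat.cast_sub hleY, Nat.cast_sub hleZ]
      rw [hval]; ring
  rw [if_pos hA1, if_pos hB1, if_pos hC1, if_pos hE] at h2n
  by_cases hA0 : a + d = 0 <;> by_cases hB0 : c = 0 <;> by_cases hC0 : b = 0 <;>
    simp only [hA0, hB0, hC0, if_true, if_false] at h2n
  -- case hA0 hB0 hC0
  · left
    refine ⟨⟨hA0, hB0, hC0, hE⟩, ?_⟩
    have hval : 2*(n:ℤ) = 0 := by rw [h2n]; ring
    exact_mod_cast (by linarith : (n:ℤ) = 0)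
  · right
    have hval : 2*(n:ℤ) = ((2:ℤ)^m - 2^X.card) * (((2:ℤ)^m - 2^Y.card) * ((2:ℤ)^m * 2^W.card)) := by
      rw [h2n]; ring
    have hp : (0:ℤ) < 2*(n:ℤ) := by rw [hval]; exact mul_pos pMx (mul_pos pMy (mul_pos pM pW))
    refine ⟨fun h => hC0 h.2.2.1, by exact_mod_cast (by linarith : (0:ℤ) < (n:ℤ)), ?_⟩
    simp only [Set.mem_insert_iff, Set.mem_singleton_iff]
    refine Or.inl ?_
    apply nat_eq
    push_cast [Nat.cast_sub hleX, Nat.cast_sub hleY]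
    rw [hval]; ring
  · right
    have hval : 2*(n:ℤ) = ((2:ℤ)^m - 2^X.card) * (((2:ℤ)^m - 2^Z.card) * ((2:ℤ)^m * 2^W.card)) := by
      rw [h2n]; ring
    have hp : (0:ℤ) < 2*(n:ℤ) := by rw [hval]; exact mul_pos pMx (mul_pos pMz (mul_pos pM pW))
    refine ⟨fun h => hB0 h.2.1, by exact_mod_cast (by linarith : (0:ℤ) < (n:ℤ)), ?_⟩
    simp only [Set.mem_insert_iff, Set.mem_singleton_iff]
    refine Or.inr (Or.inl ?_)
    apply nat_eq
    push_cast [Nat.cast_sub hleX, Nat.cast_sub hleZ]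
    rw [hval]; ring
  · right
    have hval : 2*(n:ℤ) = ((2:ℤ)^m - 2^X.card) * (((2:ℤ)^m - 2^Y.card - 2^Z.card) * ((2:ℤ)^m * 2^W.card)) := by
      rw [h2n]; ring
    have hp : (0:ℤ) < 2*(n:ℤ) := by rw [hval]; exact mul_pos pMx (mul_pos pMyz (mul_pos pM pW))
    refine ⟨fun h => hB0 h.2.1, by exact_mod_cast (by linarith : (0:ℤ) < (n:ℤ)), ?_⟩
    simp only [Set.mem_insert_iff, Set.mem_singleton_iff]
    refine Or.inr (Or.inr (Or.inr (Or.inl ?_)))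
    apply nat_eq
    push_cast [Nat.cast_sub hleX, Nat.cast_sub hleYZ, Nat.cast_sub hleY]
    rw [hval]; ring
  · right
    have hval : 2*(n:ℤ) = ((2:ℤ)^m - 2^Y.card) * (((2:ℤ)^m - 2^Z.card) * ((2:ℤ)^m * 2^W.card)) := by
      rw [h2n]; ring
    have hp : (0:ℤ) < 2*(n:ℤ) := by rw [hval]; exact mul_pos pMy (mul_pos pMz (mul_pos pM pW))
    refine ⟨fun h => hA0 h.1, by exact_mod_cast (by linarith : (0:ℤ) < (n:ℤ)), ?_⟩
    simp only [Set.mem_insert_iff, Set.mem_singleton_iff]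
    refine Or.inr (Or.inr (Or.inl ?_))
    apply nat_eq
    push_cast [Nat.cast_sub hleY, Nat.cast_sub hleZ]
    rw [hval]; ring
  · right
    have hval : 2*(n:ℤ) = ((2:ℤ)^m - 2^Y.card) * (((2:ℤ)^m - 2^X.card - 2^Z.card) * ((2:ℤ)^m * 2^W.card)) := by
      rw [h2n]; ring
    have hp : (0:ℤ) < 2*(n:ℤ) := by rw [hval]; exact mul_pos pMy (mul_pos pMxz (mul_pos pM pW))
    refine ⟨fun h => hA0 h.1, by exact_mod_cast (by linarith : (0:ℤ) < (n:ℤ)), ?_⟩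
    simp only [Set.mem_insert_iff, Set.mem_singleton_iff]
    refine Or.inr (Or.inr (Or.inr (Or.inr (Or.inl ?_))))
    apply nat_eq
    push_cast [Nat.cast_sub hleY, Nat.cast_sub hleXZ, Nat.cast_sub hleX]
    rw [hval]; ring
  · right
    have hval : 2*(n:ℤ) = ((2:ℤ)^m - 2^Z.card) * (((2:ℤ)^m - 2^X.card - 2^Y.card) * ((2:ℤ)^m * 2^W.card)) := by
      rw [h2n]; ring
    have hp : (0:ℤ) < 2*(n:ℤ) := by rw [hval]; exact mul_pos pMz (mul_pos pMxy (mul_pos pM pW))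
    refine ⟨fun h => hA0 h.1, by exact_mod_cast (by linarith : (0:ℤ) < (n:ℤ)), ?_⟩
    simp only [Set.mem_insert_iff, Set.mem_singleton_iff]
    refine Or.inr (Or.inr (Or.inr (Or.inr (Or.inr (Or.inl ?_)))))
    apply nat_eq
    push_cast [Nat.cast_sub hleZ, Nat.cast_sub hleXY, Nat.cast_sub hleX]
    rw [hval]; ring
  · right
    have hval : 2*(n:ℤ) = ((2:ℤ)^m - 2^X.card) * (((2:ℤ)^m - 2^Y.card) * (((2:ℤ)^m - 2^Z.card) * 2^W.card)) + 2^X.card*(2^Y.card*(2^Z.card*2^W.card)) := by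
      rw [h2n]; ring
    have hp : (0:ℤ) < 2*(n:ℤ) := by rw [hval]; have h1 := mul_pos pMx (mul_pos pMy (mul_pos pMz pW)); have h2 := mul_pos pX' (mul_pos pY' (mul_pos pZ' pW)); linarith
    refine ⟨fun h => hA0 h.1, by exact_mod_cast (by linarith : (0:ℤ) < (n:ℤ)), ?_⟩
    simp only [Set.mem_insert_iff, Set.mem_singleton_iff]
    refine Or.inr (Or.inr (Or.inr (Or.inr (Or.inr (Or.inr (Or.inl ?_))))))
    apply nat_eq
    push_cast [Nat.cast_sub he1, Nat.cast_sub he2, Nat.cast_sub he3]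
    rw [hval]; ring


lemma mem_delta_compl {m : ℕ} (W : Finset (Fin m)) (x : Fin m → ZMod 2) :
    x ∈ delta Wᶜ ↔ ∀ i ∈ W, x i = 0 := by
  constructor
  · intro h i hiW
    by_contra hne
    have hs : i ∈ supp x := by simp [supp, hne]
    have hc := (Finset.mem_filter.1 h).2 hs
    exact (Finset.mem_compl.1 hc) hiW
  · intro h
    refine Finset.mem_filter.2 ⟨Finset.mem_univ _, fun i hi => ?_⟩
    rw [Finset.mem_compl]
    intro hiW
    exact (Finset.mem_filter.1 hi).2 (h i hiW)

theorem stmt8 (m : ℕ) (hm : 0 < m) (X Y Z W : Finset (Fin m))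
    (hXY : X.card ≠ Y.card) (hXZ : X.card ≠ Z.card) (hYZ : Y.card ≠ Z.card)
    (hXm : X.card < m) (hYm : Y.card < m) (hZm : Z.card < m) :
    (∀ t : Msg m,
      cw (deltac X) (deltac Y) (deltac Z) (delta W) t = 0 ∨
      2 * cw (deltac X) (deltac Y) (deltac Z) (delta W) t ∈
        ({(2 ^ m - 2 ^ X.card) * (2 ^ m - 2 ^ Y.card) * 2 ^ (m + W.card),
          (2 ^ m - 2 ^ X.card) * (2 ^ m - 2 ^ Z.card) * 2 ^ (m + W.card),
          (2 ^ m - 2 ^ Y.card) * (2 ^ m - 2 ^ Z.card) * 2 ^ (m + W.card),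
          (2 ^ m - 2 ^ X.card) * (2 ^ m - 2 ^ Y.card - 2 ^ Z.card) * 2 ^ (m + W.card),
          (2 ^ m - 2 ^ Y.card) * (2 ^ m - 2 ^ X.card - 2 ^ Z.card) * 2 ^ (m + W.card),
          (2 ^ m - 2 ^ Z.card) * (2 ^ m - 2 ^ X.card - 2 ^ Y.card) * 2 ^ (m + W.card),
          (2 ^ (2 * m) - 2 ^ (m + X.card) - 2 ^ (m + Y.card) - 2 ^ (m + Z.card)
            + 2 ^ (X.card + Y.card) + 2 ^ (Y.card + Z.card) + 2 ^ (X.card + Z.card)) *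
            2 ^ (m + W.card),
          (2 ^ m - 2 ^ X.card) * (2 ^ m - 2 ^ Y.card) * (2 ^ m - 2 ^ Z.card) *
            2 ^ W.card} : Set ℕ)) ∧
    ((Finset.univ.filter fun t : Msg m =>
        cw (deltac X) (deltac Y) (deltac Z) (delta W) t = 0).card
      = 2 ^ (m - W.card)) := by
  constructor
  · intro t
    rcases master X Y Z W hXY hXZ hYZ hXm hYm hZm t with ⟨_, h0⟩ | ⟨_, _, hmem⟩
    · exact Or.inl h0
    · exact Or.inr hmem
  · have hiff : ∀ t : Msg m,
        (cw (deltac X) (deltac Y) (deltac Z) (delta W) t = 0 ↔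
        (t.1 + t.2.2.2 = 0 ∧ t.2.2.1 = 0 ∧ t.2.1 = 0 ∧ ∀ i ∈ W, t.1 i = 0)) := by
      intro t
      rcases master X Y Z W hXY hXZ hYZ hXm hYm hZm t with ⟨hc, h0⟩ | ⟨hc, hpos, _⟩
      · exact ⟨fun _ => hc, fun _ => h0⟩
      · exact ⟨fun h => absurd h (by omega), fun h => absurd h hc⟩
    have hadd : ∀ u v : ZMod 2, u + v = 0 → v = u := by decide
    have hself : ∀ u : ZMod 2, u + u = 0 := by decide
    have himg : (Finset.univ.filter fun t : Msg m =>
        cw (deltac X) (deltac Y) (deltac Z) (delta W) t = 0)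
        = (delta Wᶜ).image (fun x : Fin m → ZMod 2 => (x, 0, 0, x)) := by
      ext t
      obtain ⟨a, b, c, d⟩ := t
      rw [Finset.mem_filter, Finset.mem_image]
      simp only [Finset.mem_univ, true_and, hiff]
      constructor
      · rintro ⟨h1, h2, h3, h4⟩
        refine ⟨a, (mem_delta_compl W a).2 h4, ?_⟩
        have hd : d = a := by
          funext i
          have hh := congrFun h1 i
          simp only [Pi.add_apply, Pi.zero_apply] at hh
          exact hadd _ _ hh
        rw [h3, h2, hd]
      · rintro ⟨x, hx, hxe⟩
        simp only [Prod.mk.injEq] at hxe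
        obtain ⟨rfl, rfl, rfl, rfl⟩ := hxe
        refine ⟨funext fun i => hself _, rfl, rfl, (mem_delta_compl W x).1 hx⟩
    rw [himg, Finset.card_image_of_injective _
        (fun x y h => congrArg Prod.fst h), card_delta, Finset.card_compl, Fintype.card_fin]
end

section
/- Let m, a, b be natural numbers with a < m and a + b ≥ 1. Set n = (2^m − 2^a)·2^b, k = m + b, and let d be the natural number with 2·d = (2^m − 2^a)·2^b. Then Σ_{i=0}^{k−1} ⌈d / 2^i⌉ = n; that is, a binary linear [n, k, d] code attains the Griesmer bound. (This shows that the code C_D^{(2)} of length (2^m−2^{|X|})2^{|Y|+|Z|+|W|}, dimension m+|Y|+|Z|+|W| and minimum distance (2^m−2^{|X|})2^{|Y|+|Z|+|W|−1} is a Griesmer code, hence distance-optimal.) -/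
open Finset

lemma geom2 (n : ℕ) : ∑ i ∈ Finset.range n, (2:ℤ)^i = 2^n - 1 := by
  induction n with
  | zero => simp
  | succ n ih => rw [Finset.sum_range_succ, ih]; ring

lemma geom2' (n : ℕ) : ∑ i ∈ Finset.range n, (2:ℤ)^(n-1-i) = 2^n - 1 := by
  rw [Finset.sum_range_reflect (fun j => (2:ℤ)^j) n]
  exact geom2 n

/-- The code of length `n = (2^m − 2^a)·2^b`, dimension `k = m + b` and minimum
distance `d` with `2d = (2^m − 2^a)·2^b` attains the Griesmer bound:
`Σ_{i=0}^{k-1} ⌈d/2^i⌉ = n`. -/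
theorem stmt11 (m a b : ℕ) (ha : a < m) (hab : 1 ≤ a + b)
    (d : ℕ) (hd : 2 * d = (2 ^ m - 2 ^ a) * 2 ^ b) :
    ∑ i ∈ Finset.range (m + b), ⌈(d : ℚ) / 2 ^ i⌉ =
      (((2 ^ m - 2 ^ a) * 2 ^ b : ℕ) : ℤ) := by
  obtain ⟨s, hs⟩ : ∃ s, a + b = s + 1 := ⟨a + b - 1, by omega⟩
  obtain ⟨u, hu, hu1⟩ : ∃ u, m = a + u ∧ 1 ≤ u := ⟨m - a, by omega, by omega⟩
  have hpow : (2:ℕ)^a ≤ 2^m := Nat.pow_le_pow_right (by norm_num) (by omega)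
  have hone : (1:ℕ) ≤ 2^u := Nat.one_le_two_pow
  have hdval : d = 2^s * (2^u - 1) := by
    have h1 : (2:ℕ)^m - 2^a = 2^a * (2^u - 1) := by
      rw [hu, pow_add, Nat.mul_sub, mul_one]
    have h2 : 2 * d = 2 * (2^s * (2^u - 1)) := by
      rw [hd, h1]
      have : (2:ℕ)^a * 2^b = 2 * 2^s := by
        rw [← pow_add, hs, pow_succ]; ring
      rw [mul_comm ((2:ℕ)^a * (2^u-1)) (2^b)]
      rw [show (2:ℕ)^b * (2^a * (2^u-1)) = (2^a * 2^b) * (2^u-1) by ring, this]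
      ring
    omega
  have hdQ : (d : ℚ) = 2^s * (2^u - 1) := by
    rw [hdval]; push_cast [hone]; ring
  have hmb : m + b = (s + 1) + u := by omega
  rw [hmb, Finset.sum_range_add]
  have part1 : ∑ i ∈ Finset.range (s+1), ⌈(d : ℚ) / 2 ^ i⌉
      = ∑ i ∈ Finset.range (s+1), (2:ℤ)^(s-i) * (2^u - 1) := by
    apply Finset.sum_congr rfl
    intro i hi
    have hi' : i ≤ s := by simpa using Nat.lt_succ_iff.mp (Finset.mem_range.mp hi)
    have : (d : ℚ) / 2 ^ i = (((2:ℤ)^(s-i) * (2^u - 1) : ℤ) : ℚ) := by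
      rw [hdQ]
      have : (2:ℚ)^s = 2^i * 2^(s-i) := by rw [← pow_add]; congr 1; omega
      rw [this]
      push_cast
      field_simp
    rw [this, Int.ceil_intCast]
  have part2 : ∑ j ∈ Finset.range u, ⌈(d : ℚ) / 2 ^ ((s+1) + j)⌉
      = ∑ j ∈ Finset.range u, (2:ℤ)^(u-1-j) := by
    apply Finset.sum_congr rfl
    intro j hj
    have hj' : j < u := Finset.mem_range.mp hj
    have hx : (d : ℚ) / 2 ^ ((s+1) + j) = (2^u - 1) / 2^(j+1) := by
      rw [hdQ, show (s+1)+j = s + (j+1) by omega, pow_add]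
      have h2s : (2:ℚ)^s ≠ 0 := by positivity
      field_simp
    have hkey : (2:ℚ)^(u-1-j) * 2^(j+1) = 2^u := by
      rw [← pow_add]; congr 1; omega
    have hpos : (0:ℚ) < 2^(j+1) := by positivity
    rw [hx, Int.ceil_eq_iff]
    constructor
    · rw [lt_div_iff₀ hpos]
      push_cast
      nlinarith [hkey, one_lt_pow₀ (by norm_num : (1:ℚ) < 2) (by omega : j+1 ≠ 0)]
    · rw [div_le_iff₀ hpos]
      push_cast
      nlinarith [hkey]
  rw [part1, part2, ← Finset.sum_mul]
  have r1 : ∑ i ∈ Finset.range (s+1), (2:ℤ)^(s-i) = 2^(s+1) - 1 := geom2' (s+1)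
  have r2 : ∑ j ∈ Finset.range u, (2:ℤ)^(u-1-j) = 2^u - 1 := geom2' u
  rw [r1, r2]
  have hcast : (((2^m - 2^a) * 2^b : ℕ) : ℤ) = ((2:ℤ)^m - 2^a) * 2^b := by
    push_cast [hpow]; ring
  rw [hcast, hu, pow_add]
  have hT : (2:ℤ)^a * 2^b = 2^(s+1) := by rw [← pow_add, hs]
  linear_combination (1 - (2:ℤ)^u) * hT
end

section
/- Let m, s be natural numbers with 1 ≤ s ≤ 4m. Set n = 2^{4m} − 2^s, k = 4m and d = 2^{4m−1} − 2^{s−1}. Then Σ_{i=0}^{k−1} ⌈d / 2^i⌉ = n; that is, a binary linear [n, k, d] code attains the Griesmer bound. (This shows that the code C_{D^c}^{(2)} of length 2^{4m} − 2^{|X|+|Y|+|Z|+|W|}, dimension 4m and minimum distance 2^{4m−1} − 2^{|X|+|Y|+|Z|+|W|−1} is a Griesmer code, hence distance-optimal.) -/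
/-!
With `d = 2^a - 2^b` (here `a = k - 1`, `b = s - 1`), the term `⌈d / 2^i⌉` equals
`2^(a-i) - 2^(b-i)` while `i ≤ b`, and `2^(a-i)` once `i > b`, since then `2^b / 2^i` is a
fraction in `(0, 1)` that the ceiling absorbs. Summing over `i ≤ a` gives two geometric series,
`(2^(a+1) - 1) - (2^(b+1) - 1)`.
-/

open Finset

theorem Int.ceil_intCast_sub_eq {α : Type*} [Field α] [LinearOrder α] [IsStrictOrderedRing α]
    [FloorRing α] (n : ℤ) {c : α} (hc₀ : 0 ≤ c) (hc₁ : c < 1) : ⌈(n : α) - c⌉ = n := by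
  rw [sub_eq_neg_add, Int.ceil_add_intCast, Int.ceil_neg, Int.floor_eq_zero_iff.2 ⟨hc₀, hc₁⟩]
  simp

theorem ceil_two_pow_sub_two_pow_div_two_pow {a i : ℕ} (b : ℕ) (hi : i ≤ a) :
    ⌈((2 : ℚ) ^ a - 2 ^ b) / 2 ^ i⌉ = 2 ^ (a - i) - if i ≤ b then 2 ^ (b - i) else 0 := by
  have hsplit : ((2 : ℚ) ^ a - 2 ^ b) / 2 ^ i = ((2 ^ (a - i) : ℤ) : ℚ) - 2 ^ b / 2 ^ i := by
    rw [sub_div, Int.cast_pow, Int.cast_ofNat, pow_sub₀ _ two_ne_zero hi, div_eq_mul_inv]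
  rw [hsplit]
  split_ifs with hib
  · rw [div_eq_mul_inv, ← pow_sub₀ _ two_ne_zero hib]
    exact_mod_cast Int.ceil_intCast ((2 : ℤ) ^ (a - i) - 2 ^ (b - i))
  · rw [sub_zero, Int.ceil_intCast_sub_eq _ (by positivity)
      ((div_lt_one (by positivity)).2 (pow_lt_pow_right₀ one_lt_two (not_le.1 hib)))]

theorem sum_range_two_pow_sub (a : ℕ) :
    ∑ i ∈ range (a + 1), (2 : ℤ) ^ (a - i) = 2 ^ (a + 1) - 1 := by
  have hreflect := sum_range_reflect (fun j ↦ (2 : ℤ) ^ j) (a + 1)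
  rw [Nat.add_sub_cancel] at hreflect
  simpa [hreflect] using geom_sum_mul (2 : ℤ) (a + 1)

theorem sum_range_ite_two_pow_sub {a b : ℕ} (hba : b ≤ a) :
    ∑ i ∈ range (a + 1), (if i ≤ b then (2 : ℤ) ^ (b - i) else 0) = 2 ^ (b + 1) - 1 := by
  rw [← sum_filter, ← sum_range_two_pow_sub]
  congr 1
  ext i
  simp only [mem_filter, mem_range]
  omega

theorem sum_range_ceil_two_pow_sub_two_pow_div_two_pow {a b : ℕ} (hba : b ≤ a) :
    ∑ i ∈ range (a + 1), ⌈((2 : ℚ) ^ a - 2 ^ b) / 2 ^ i⌉ = 2 ^ (a + 1) - 2 ^ (b + 1) := by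
  rw [sum_congr rfl fun i hi ↦ ceil_two_pow_sub_two_pow_div_two_pow b
      (Nat.lt_succ_iff.1 (mem_range.1 hi)),
    sum_sub_distrib, sum_range_two_pow_sub, sum_range_ite_two_pow_sub hba]
  ring

/-- The code of length `n = 2^{4m} − 2^s`, dimension `k = 4m` and minimum
distance `d = 2^{4m−1} − 2^{s−1}` attains the Griesmer bound:
`Σ_{i=0}^{k-1} ⌈d/2^i⌉ = n`. -/
theorem stmt12 (m s : ℕ) (hs : 1 ≤ s) (hsm : s ≤ 4 * m) :
    ∑ i ∈ Finset.range (4 * m),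
        ⌈(((2 ^ (4 * m - 1) - 2 ^ (s - 1) : ℕ) : ℚ)) / 2 ^ i⌉ =
      ((2 ^ (4 * m) - 2 ^ s : ℕ) : ℤ) := by
  obtain ⟨b, rfl⟩ : ∃ b, s = b + 1 := ⟨s - 1, by omega⟩
  obtain ⟨a, ha⟩ : ∃ a, 4 * m = a + 1 := ⟨4 * m - 1, by omega⟩
  have hba : b ≤ a := by omega
  rw [ha, Nat.add_sub_cancel, Nat.add_sub_cancel,
    Nat.cast_sub (Nat.pow_le_pow_right two_pos hba),
    Nat.cast_sub (Nat.pow_le_pow_right two_pos (Nat.succ_le_succ hba))]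
  push_cast
  exact sum_range_ceil_two_pow_sub_two_pow_div_two_pow hba
end

section
/- Let m, x, y, c be natural numbers with y < x < m. Set k = 2m + c, d = (2^m − 2^x − 2^y)·2^{m+c−1} and n = (2^m − 2^x)(2^m − 2^y)·2^c. Then Σ_{i=0}^{k−1} ⌈(d+1)/2^i⌉ = n − 2^{x+y+c} + m + c + y + 1. Consequently, Σ_{i=0}^{k−1} ⌈(d+1)/2^i⌉ ≥ n + 1 if and only if 2^{x+y+c} ≤ m + c + y. (By the Griesmer bound this proves that the four-weight code C_D^{(2)} with parameters [n, k, d] is distance-optimal whenever 2^{|X|+|Y|+|Z|+|W|} ≤ m + |Z| + |W| + min{|X|,|Y|}.) -/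
/-!
Since `d` is an integer, `⌈(d + 1) / 2^i⌉ = ⌊d / 2^i⌋ + 1`. Write `d = A·2^(m+c-1)` with
`A = 2^m - 2^x - 2^y`. The first `m + c` floors are `A·2^(m+c-1-i)` and add up to
`A·(2^(m+c) - 1)`; the remaining `m` are `⌊A / 2^j⌋` for `1 ≤ j ≤ m`, and by Legendre's formula
they add up to `A - s₂(A)`, where `s₂` is the binary digit sum. The ones of `A` sit exactly in
positions `y, …, x-1` and `x+1, …, m-1`, so `s₂(A) = m - y - 1`, and `A·2^(m+c) = n - 2^(x+y+c)`.
-/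

open Finset

theorem Int.ceil_natCast_add_one_div {K : Type*} [Field K] [LinearOrder K] [IsStrictOrderedRing K]
    [FloorRing K] (a b : ℕ) (hb : 0 < b) : ⌈((a : K) + 1) / b⌉ = (a / b : ℕ) + 1 := by
  have hb' : (0 : K) < b := by exact_mod_cast hb
  have hlo : a / b * b < a + 1 := Nat.lt_add_one_iff.mpr (Nat.div_mul_le_self a b)
  have hhi : a + 1 ≤ (a / b + 1) * b := mul_comm b _ ▸ Nat.lt_mul_div_succ a hb
  rw [Int.ceil_eq_iff]
  push_cast
  rw [add_sub_cancel_right, lt_div_iff₀ hb', div_le_iff₀ hb']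
  exact ⟨by exact_mod_cast hlo, by exact_mod_cast hhi⟩

namespace Nat

theorem sum_digits_add_pow_mul {p a k : ℕ} (hp : 1 < p) (ha : a < p ^ k) (b : ℕ) :
    (p.digits (a + p ^ k * b)).sum = (p.digits a).sum + (p.digits b).sum := by
  rcases b.eq_zero_or_pos with rfl | hb
  · simp
  have hlen : (p.digits a).length ≤ k := (digits_length_le_iff hp a).mpr ha
  rw [← Nat.add_sub_cancel' hlen, ← digits_append_zeroes_append_digits hp hb]
  simp

theorem sum_digits_pow_mul {p : ℕ} (hp : 1 < p) (k n : ℕ) :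
    (p.digits (p ^ k * n)).sum = (p.digits n).sum := by
  simpa using sum_digits_add_pow_mul hp (pow_pos (zero_lt_one.trans hp) k) n

theorem sum_digits_two_pow_sub_one (k : ℕ) : (digits 2 (2 ^ k - 1)).sum = k := by
  induction k with
  | zero => simp
  | succ k ih =>
    have h : 2 ^ (k + 1) - 1 = 1 + 2 ^ 1 * (2 ^ k - 1) := by
      have := Nat.one_le_two_pow (n := k); rw [pow_succ]; omega
    rw [h, sum_digits_add_pow_mul one_lt_two (by norm_num), ih]
    simp [add_comm]

theorem sub_one_mul_sum_div_pow_eq_sub_sum_digits_of_lt {p n L : ℕ} (hp : 1 < p)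
    (hn : n < p ^ L) :
    (p - 1) * ∑ i ∈ range L, n / p ^ (i + 1) = n - (p.digits n).sum := by
  rcases eq_or_ne n 0 with rfl | hn0
  · simp
  rw [← sub_one_mul_sum_log_div_pow_eq_sub_sum_digits]
  congr 1
  symm
  apply sum_subset (range_subset_range.mpr (log_lt_of_lt_pow hn0 hn))
  intro i hi hi'
  simp only [mem_range, not_lt] at hi hi'
  exact Nat.div_eq_of_lt ((lt_pow_succ_log_self hp n).trans_le
    (Nat.pow_le_pow_right (zero_lt_one.trans hp) (by omega)))

theorem sum_range_mul_pow_div_pow {p : ℕ} (hp : 0 < p) (A e L : ℕ) :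
    ∑ i ∈ range (e + 1 + L), A * p ^ e / p ^ i =
      A * ∑ i ∈ range (e + 1), p ^ i + ∑ j ∈ range L, A / p ^ (j + 1) := by
  rw [sum_range_add, mul_sum, ← sum_range_reflect (fun i ↦ A * p ^ i)]
  congr 1
  · refine sum_congr rfl fun i hi ↦ ?_
    have hie : i ≤ e := Nat.lt_succ_iff.mp (mem_range.mp hi)
    rw [add_tsub_cancel_right, ← Nat.sub_add_cancel hie, pow_add, ← mul_assoc,
      Nat.mul_div_cancel _ (pow_pos hp i), Nat.add_sub_cancel]
  · refine sum_congr rfl fun j _ ↦ ?_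
    rw [add_assoc, add_comm 1 j, pow_add, mul_comm (p ^ e),
      Nat.mul_div_mul_right _ _ (pow_pos hp e)]

theorem sum_digits_two_pow_sub_two_pow_sub_two_pow {m x y : ℕ} (hyx : y < x) (hxm : x < m) :
    (digits 2 (2 ^ m - 2 ^ x - 2 ^ y)).sum = m - y - 1 := by
  obtain ⟨q, rfl⟩ := Nat.exists_eq_add_of_le hyx.le
  obtain ⟨r, rfl⟩ := Nat.exists_eq_add_of_lt hxm
  obtain ⟨a, ha⟩ : ∃ a, 2 ^ q = a + 1 := ⟨_, (Nat.succ_pred_eq_of_pos (Nat.two_pow_pos q)).symm⟩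
  obtain ⟨b, hb⟩ : ∃ b, 2 ^ r = b + 1 := ⟨_, (Nat.succ_pred_eq_of_pos (Nat.two_pow_pos r)).symm⟩
  have hsplit : 2 ^ (y + q + r + 1) - 2 ^ (y + q) - 2 ^ y =
      2 ^ y * ((2 ^ q - 1) + 2 ^ (q + 1) * (2 ^ r - 1)) := by
    simp only [pow_add, pow_one, ha, hb, Nat.add_sub_cancel]
    refine Nat.sub_eq_of_eq_add (Nat.sub_eq_of_eq_add ?_)
    ring
  rw [hsplit, sum_digits_pow_mul one_lt_two,
    sum_digits_add_pow_mul one_lt_two ((Nat.sub_lt (Nat.two_pow_pos q) one_pos).trans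
      (Nat.pow_lt_pow_succ one_lt_two)),
    sum_digits_two_pow_sub_one, sum_digits_two_pow_sub_one]
  omega

theorem sum_div_two_pow_succ_two_pow_sub_two_pow_sub_two_pow {m x y : ℕ} (hyx : y < x)
    (hxm : x < m) :
    ∑ j ∈ range m, (2 ^ m - 2 ^ x - 2 ^ y) / 2 ^ (j + 1) + (m - y - 1) =
      2 ^ m - 2 ^ x - 2 ^ y := by
  have hlt : 2 ^ m - 2 ^ x - 2 ^ y < 2 ^ m := by
    have := Nat.two_pow_pos m; have := Nat.two_pow_pos x; have := Nat.two_pow_pos y; omega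
  have hle : m - y - 1 ≤ 2 ^ m - 2 ^ x - 2 ^ y := by
    rw [← sum_digits_two_pow_sub_two_pow_sub_two_pow hyx hxm]
    exact digit_sum_le 2 _
  have := sub_one_mul_sum_div_pow_eq_sub_sum_digits_of_lt one_lt_two hlt
  simp only [sum_digits_two_pow_sub_two_pow_sub_two_pow hyx hxm, Nat.reduceSub, one_mul] at this
  omega

end Nat

theorem sum_ceil_succ_div_two_pow_eq {m x y : ℕ} (c : ℕ) (hyx : y < x) (hxm : x < m) :
    ∑ i ∈ range (2 * m + c),
        ⌈((((2 ^ m - 2 ^ x - 2 ^ y) * 2 ^ (m + c - 1) : ℕ) : ℚ) + 1) / 2 ^ i⌉ =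
      (((2 ^ m - 2 ^ x) * (2 ^ m - 2 ^ y) * 2 ^ c : ℕ) : ℤ) - 2 ^ (x + y + c) + m + c + y + 1 := by
  have hpow_le {a : ℕ} (ha : a ≤ m) : 2 ^ a ≤ 2 ^ m := Nat.pow_le_pow_right two_pos ha
  have hxy : 2 ^ x + 2 ^ y ≤ 2 ^ m := by
    have := Nat.pow_lt_pow_right one_lt_two hyx
    have := Nat.pow_le_pow_right two_pos (Nat.succ_le_of_lt hxm)
    rw [pow_succ] at this; omega
  have hfloor := Nat.sum_div_two_pow_succ_two_pow_sub_two_pow_sub_two_pow hyx hxm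
  have hgeom := geom_sum_mul (2 : ℤ) (m + c)
  have hceil (i : ℕ) :
      ⌈((((2 ^ m - 2 ^ x - 2 ^ y) * 2 ^ (m + c - 1) : ℕ) : ℚ) + 1) / 2 ^ i⌉ =
      (((2 ^ m - 2 ^ x - 2 ^ y) * 2 ^ (m + c - 1) / 2 ^ i : ℕ) : ℤ) + 1 := by
    rw [show (2 : ℚ) ^ i = ((2 ^ i : ℕ) : ℚ) by push_cast; rfl]
    exact Int.ceil_natCast_add_one_div _ _ (Nat.two_pow_pos i)
  have hsplit := Nat.sum_range_mul_pow_div_pow two_pos (2 ^ m - 2 ^ x - 2 ^ y) (m + c - 1) m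
  rw [show m + c - 1 + 1 = m + c by omega, show m + c + m = 2 * m + c by omega] at hsplit
  rw [sum_congr rfl fun i _ ↦ hceil i, sum_add_distrib, ← Nat.cast_sum, hsplit, sum_const,
    card_range, nsmul_one]
  generalize ∑ j ∈ range m, (2 ^ m - 2 ^ x - 2 ^ y) / 2 ^ (j + 1) = S at hfloor ⊢
  simp only [Nat.sub_sub] at hfloor ⊢
  zify [hxy, hpow_le hxm.le, hpow_le (hyx.trans hxm).le, show y + 1 ≤ m by omega] at hfloor ⊢
  push_cast at hgeom ⊢
  linear_combination hfloor + ((2 : ℤ) ^ m - 2 ^ x - 2 ^ y) * hgeom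

/-- For `k = 2m + c`, `d = (2^m − 2^x − 2^y)·2^{m+c−1}` and
`n = (2^m − 2^x)(2^m − 2^y)·2^c`, the Griesmer sum of `d + 1` is
`n − 2^{x+y+c} + m + c + y + 1`; hence it is `≥ n + 1` iff
`2^{x+y+c} ≤ m + c + y`. -/
theorem stmt13 (m x y c : ℕ) (hyx : y < x) (hxm : x < m) :
    (∑ i ∈ Finset.range (2 * m + c),
        ⌈((((2 ^ m - 2 ^ x - 2 ^ y) * 2 ^ (m + c - 1) : ℕ) : ℚ) + 1) / 2 ^ i⌉ =
      ((((2 ^ m - 2 ^ x) * (2 ^ m - 2 ^ y) * 2 ^ c : ℕ) : ℤ)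
        - 2 ^ (x + y + c) + m + c + y + 1)) ∧
    ((∑ i ∈ Finset.range (2 * m + c),
        ⌈((((2 ^ m - 2 ^ x - 2 ^ y) * 2 ^ (m + c - 1) : ℕ) : ℚ) + 1) / 2 ^ i⌉ ≥
       (((2 ^ m - 2 ^ x) * (2 ^ m - 2 ^ y) * 2 ^ c : ℕ) : ℤ) + 1) ↔
      2 ^ (x + y + c) ≤ m + c + y) := by
  have h := sum_ceil_succ_div_two_pow_eq c hyx hxm
  refine ⟨h, ?_⟩
  rw [h, ge_iff_le]
  zify
  constructor <;> intro <;> linarith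
end

section
/- Let X, Y, Z, W be subsets of Fin m with |X| + |Y| + |Z| + |W| ≥ 3, and let A = Δ_X, B = Δ_Y, C = Δ_Z, E = Δ_W. Then the binary code {c_t | t ∈ (Fin m → 𝔽₂)⁴} is self-orthogonal with respect to the Euclidean inner product: for all messages t, t', Σ_{(a,b,c,e) ∈ A×B×C×E} c_t(a,b,c,e)·c_{t'}(a,b,c,e) = 0 in 𝔽₂. -/
open Finset

section Key

variable {α : Type*} [Fintype α] [DecidableEq α]

/-- Functions supported in `T`. -/
def DD (T : Finset α) : Finset (α → ZMod 2) :=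
  Finset.univ.filter fun f => ∀ i, f i ≠ 0 → i ∈ T

lemma pairzero (T : Finset α) (hT : 3 ≤ T.card) (i j : α) :
    ∑ f ∈ DD T, f i * f j = 0 := by
  obtain ⟨k, hkT, hki, hkj⟩ : ∃ k ∈ T, k ≠ i ∧ k ≠ j := by
    by_contra hc
    push_neg at hc
    have hsub : T ⊆ {i, j} := by
      intro x hx
      rcases eq_or_ne x i with rfl | hxi
      · simp
      · simp [hc x hx hxi]
    have := (Finset.card_le_card hsub).trans (Finset.card_insert_le _ _)
    simp at this
    omega
  refine Finset.sum_involution (fun f _ => Function.update f k (f k + 1)) ?_ ?_ ?_ ?_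
  · intro f hf
    show f i * f j + Function.update f k (f k + 1) i * Function.update f k (f k + 1) j = 0
    rw [Function.update_of_ne (fun h => hki h.symm), Function.update_of_ne (fun h => hkj h.symm)]
    exact CharTwo.add_self_eq_zero _
  · intro f hf _ hcontra
    have := congrFun hcontra k
    simp [Function.update_self] at this
  · intro f hf
    simp only [DD, Finset.mem_filter, Finset.mem_univ, true_and] at hf ⊢
    intro x hx
    rcases eq_or_ne x k with rfl | hxk
    · exact hkT
    · rw [Function.update_of_ne hxk] at hx
      exact hf x hx
  · intro f hf
    show Function.update (Function.update f k (f k + 1)) k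
        (Function.update f k (f k + 1) k + 1) = f
    ext x
    rcases eq_or_ne x k with rfl | hxk
    · simp only [Function.update_self]
      have h2 : (1 + 1 : ZMod 2) = 0 := by decide
      rw [add_assoc, h2, add_zero]
    · simp [Function.update_of_ne hxk]

lemma key (T : Finset α) (hT : 3 ≤ T.card) (u v : α → ZMod 2) :
    ∑ f ∈ DD T, (∑ i, u i * f i) * (∑ j, v j * f j) = 0 := by
  have expand : ∀ f : α → ZMod 2,
      (∑ i, u i * f i) * (∑ j, v j * f j)
        = ∑ i, ∑ j, u i * v j * (f i * f j) := by
    intro f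
    rw [Finset.sum_mul_sum]
    congr 1; ext i; congr 1; ext j; ring
  simp_rw [expand]
  rw [Finset.sum_comm]
  refine Finset.sum_eq_zero fun i _ => ?_
  rw [Finset.sum_comm]
  refine Finset.sum_eq_zero fun j _ => ?_
  rw [← Finset.mul_sum, pairzero T hT i j, mul_zero]

end Key

abbrev Pos (m : ℕ) := Fin m ⊕ (Fin m ⊕ (Fin m ⊕ Fin m))

/-- Flatten a message into a function on `Pos m`. -/
def emb {m : ℕ} (p : Msg m) : Pos m → ZMod 2 :=
  Sum.elim p.1 (Sum.elim p.2.1 (Sum.elim p.2.2.1 p.2.2.2))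

/-- The coefficient vector of the linear functional `cword t`. -/
def coef {m : ℕ} (t : Msg m) : Pos m → ZMod 2 :=
  Sum.elim (t.1 + t.2.2.2) (Sum.elim t.2.2.1 (Sum.elim t.2.1 t.1))

lemma cword_eq {m : ℕ} (t p : Msg m) :
    cword t p = ∑ x : Pos m, coef t x * emb p x := by
  rw [Fintype.sum_sum_type, Fintype.sum_sum_type, Fintype.sum_sum_type]
  simp only [coef, emb, Sum.elim_inl, Sum.elim_inr]
  simp only [cword, dotp]
  ring

theorem stmt17 (m : ℕ) (hm : 0 < m) (X Y Z W : Finset (Fin m))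
    (h : 3 ≤ X.card + Y.card + Z.card + W.card) :
    ∀ t t' : Msg m,
      ∑ p ∈ delta X ×ˢ delta Y ×ˢ delta Z ×ˢ delta W,
        cword t p * cword t' p = (0 : ZMod 2) := by
  intro t t'
  set T : Finset (Pos m) := X.disjSum ((Y.disjSum (Z.disjSum W))) with hTdef
  have hT : 3 ≤ T.card := by
    simp only [hTdef, Finset.card_disjSum]
    omega
  have htrans : ∑ p ∈ delta X ×ˢ delta Y ×ˢ delta Z ×ˢ delta W,
      cword t p * cword t' p
      = ∑ f ∈ DD T, (∑ x : Pos m, coef t x * f x) * (∑ x : Pos m, coef t' x * f x) := by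
    refine Finset.sum_bij' (fun p _ => emb p)
      (fun f _ => (f ∘ Sum.inl, f ∘ (Sum.inr ∘ Sum.inl),
        f ∘ (Sum.inr ∘ Sum.inr ∘ Sum.inl), f ∘ (Sum.inr ∘ Sum.inr ∘ Sum.inr)))
      ?_ ?_ ?_ ?_ ?_
    · intro p hp
      simp only [Finset.mem_product, delta, supp, Finset.mem_filter, Finset.mem_univ,
        true_and, Finset.subset_iff] at hp
      simp only [DD, Finset.mem_filter, Finset.mem_univ, true_and]
      rintro (i | i | i | i) hx
      · simp only [hTdef, Finset.inl_mem_disjSum]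
        exact hp.1 (by simpa [emb] using hx)
      · simp only [hTdef, Finset.inr_mem_disjSum, Finset.inl_mem_disjSum]
        exact hp.2.1 (by simpa [emb] using hx)
      · simp only [hTdef, Finset.inr_mem_disjSum, Finset.inl_mem_disjSum]
        exact hp.2.2.1 (by simpa [emb] using hx)
      · simp only [hTdef, Finset.inr_mem_disjSum]
        exact hp.2.2.2 (by simpa [emb] using hx)
    · intro f hf
      simp only [DD, Finset.mem_filter, Finset.mem_univ, true_and] at hf
      simp only [Finset.mem_product, delta, supp, Finset.mem_filter, Finset.mem_univ,
        true_and, Finset.subset_iff]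
      refine ⟨fun i hi => ?_, fun i hi => ?_, fun i hi => ?_, fun i hi => ?_⟩
      · have := hf (Sum.inl i) (by simpa using hi)
        simpa [hTdef, Finset.inl_mem_disjSum] using this
      · have := hf (Sum.inr (Sum.inl i)) (by simpa using hi)
        simpa [hTdef, Finset.inr_mem_disjSum, Finset.inl_mem_disjSum] using this
      · have := hf (Sum.inr (Sum.inr (Sum.inl i))) (by simpa using hi)
        simpa [hTdef, Finset.inr_mem_disjSum, Finset.inl_mem_disjSum] using this
      · have := hf (Sum.inr (Sum.inr (Sum.inr i))) (by simpa using hi)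
        simpa [hTdef, Finset.inr_mem_disjSum] using this
    · intro p hp
      obtain ⟨a, b, c, e⟩ := p
      refine Prod.ext ?_ (Prod.ext ?_ (Prod.ext ?_ ?_)) <;> funext x <;>
        simp [emb, Function.comp]
    · intro f hf
      ext (i | i | i | i) <;> simp [emb]
    · intro p hp
      rw [cword_eq, cword_eq]
  rw [htrans]
  exact key T hT (coef t) (coef t')
end
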